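/- (Relation to Greene's hypergeometric function) If A_0 ≠ ε and A_i ≠ B_i for each 1 ≤ i ≤ n, then (n+1)F_n*(A_0,...,A_n; B_1,...,B_n | x)_q = [Π_{i=1}^n binom(A_i, B_i)^{-1}]·(n+1)F_n^G(A_0,...,A_n; B_1,...,B_n | x)_q, where the binomial and Greene's function are defined below. -/

import Mathlib

noncomputable instance {F : Type*} [Field F] [Fintype F] : Fintype (MulChar F ℂ) :=
  Fintype.ofFinite _

/-- The finite field hypergeometric function `ₙ₊₁Fₙ*` of McCarthy. -/
noncomputable def hypF {F : Type*} [Field F] [Fintype F] (θ : AddChar F ℂ) {n : ℕ}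
    (A : Fin (n + 1) → MulChar F ℂ) (B : Fin n → MulChar F ℂ) (x : F) : ℂ :=
  (1 / ((Fintype.card F : ℂ) - 1)) *
    ∑ χ : MulChar F ℂ,
      (∏ i, gaussSum (A i * χ) θ / gaussSum (A i) θ) *
        (∏ j, gaussSum (B j * χ)⁻¹ θ / gaussSum (B j)⁻¹ θ) *
        gaussSum χ⁻¹ θ * (χ (-1)) ^ (n + 1) * χ x

/-- Greene's binomial coefficient of two multiplicative characters. -/
noncomputable def greeneBinom {F : Type*} [Field F] [Fintype F] (A B : MulChar F ℂ) : ℂ :=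
  B (-1) / (Fintype.card F : ℂ) * ∑ x : F, A x * B⁻¹ (1 - x)

/-- Greene's finite field hypergeometric function `ₙ₊₁Fₙᴳ`. -/
noncomputable def greeneF {F : Type*} [Field F] [Fintype F] {n : ℕ}
    (A : Fin (n + 1) → MulChar F ℂ) (B : Fin n → MulChar F ℂ) (x : F) : ℂ :=
  (Fintype.card F : ℂ) / ((Fintype.card F : ℂ) - 1) *
    ∑ χ : MulChar F ℂ,
      greeneBinom (A 0 * χ) χ * (∏ i : Fin n, greeneBinom (A i.succ * χ) (B i * χ)) * χ x

/-!
For `A ≠ B`, Greene's binomial is a Jacobi sum, so `binom(A, B) = B(-1) g(A) g(B⁻¹) / (q g(AB⁻¹))`.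
Twisting both characters by `χ` leaves `g(AB⁻¹)` unchanged, so each factor of Greene's summand is
`binom(Aᵢ, Bᵢ)` times `χ(-1) · g(Aᵢχ)/g(Aᵢ) · g((Bᵢχ)⁻¹)/g(Bᵢ⁻¹)`, and `q · binom(A₀χ, χ)` is
`χ(-1) · g(A₀χ)/g(A₀) · g(χ⁻¹)`. The two sums then agree term by term.
-/

lemma gaussSum_ne_zero_of_addChar_ne_one {F F' : Type*} [Field F] [Fintype F] [Field F']
    (hq : (Fintype.card F : F') ≠ 0) {θ : AddChar F F'} (hθ : θ ≠ 1) (χ : MulChar F F') :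
    gaussSum χ θ ≠ 0 := by
  rcases eq_or_ne χ 1 with rfl | hχ
  · rw [gaussSum_one_left hθ]
    exact neg_ne_zero.mpr one_ne_zero
  · exact gaussSum_ne_zero_of_nontrivial hq hχ (AddChar.IsPrimitive.of_ne_one hθ)

section GreeneBinom

variable {F : Type*} [Field F] [Fintype F] {θ : AddChar F ℂ}

lemma card_ne_zero_complex : (Fintype.card F : ℂ) ≠ 0 :=
  Nat.cast_ne_zero.mpr Fintype.card_ne_zero

lemma greeneBinom_eq_gaussSum (hθ : θ ≠ 1) {A B : MulChar F ℂ} (hAB : A ≠ B) :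
    greeneBinom A B = B (-1) * gaussSum A θ * gaussSum B⁻¹ θ /
      ((Fintype.card F : ℂ) * gaussSum (A * B⁻¹) θ) := by
  have hJ : jacobiSum A B⁻¹ = gaussSum A θ * gaussSum B⁻¹ θ / gaussSum (A * B⁻¹) θ :=
    jacobiSum_eq_gaussSum_mul_gaussSum_div_gaussSum card_ne_zero_complex
      (fun h => hAB (mul_inv_eq_one.mp h)) (AddChar.IsPrimitive.of_ne_one hθ)
  change B (-1) / (Fintype.card F : ℂ) * jacobiSum A B⁻¹ = _
  rw [hJ]
  ring

lemma greeneBinom_ne_zero (hθ : θ ≠ 1) {A B : MulChar F ℂ} (hAB : A ≠ B) :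
    greeneBinom A B ≠ 0 := by
  have hg := gaussSum_ne_zero_of_addChar_ne_one card_ne_zero_complex hθ
  rw [greeneBinom_eq_gaussSum hθ hAB]
  exact div_ne_zero
    (mul_ne_zero (mul_ne_zero (MulChar.apply_ne_zero_iff.mpr isUnit_one.neg) (hg A)) (hg B⁻¹))
    (mul_ne_zero card_ne_zero_complex (hg _))

lemma greeneBinom_mul_right (hθ : θ ≠ 1) {A B : MulChar F ℂ} (hAB : A ≠ B) (χ : MulChar F ℂ) :
    greeneBinom (A * χ) (B * χ) =
      χ (-1) * (gaussSum (A * χ) θ / gaussSum A θ) *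
        (gaussSum (B * χ)⁻¹ θ / gaussSum B⁻¹ θ) * greeneBinom A B := by
  have hABχ : A * χ ≠ B * χ := fun h => hAB (mul_right_cancel h)
  have hg := gaussSum_ne_zero_of_addChar_ne_one card_ne_zero_complex hθ
  rw [greeneBinom_eq_gaussSum hθ hABχ, greeneBinom_eq_gaussSum hθ hAB, MulChar.mul_apply,
    show A * χ * (B * χ)⁻¹ = A * B⁻¹ by group]
  field_simp [hg A, hg B⁻¹]

lemma card_mul_greeneBinom_mul_left_self (hθ : θ ≠ 1) {A : MulChar F ℂ} (hA : A ≠ 1)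
    (χ : MulChar F ℂ) :
    (Fintype.card F : ℂ) * greeneBinom (A * χ) χ =
      χ (-1) * (gaussSum (A * χ) θ / gaussSum A θ) * gaussSum χ⁻¹ θ := by
  have hAχ : A * χ ≠ χ := fun h => hA (mul_eq_right.mp h)
  rw [greeneBinom_eq_gaussSum hθ hAχ, mul_inv_cancel_right]
  field_simp [card_ne_zero_complex]

end GreeneBinom

/-- Relation between McCarthy's `ₙ₊₁Fₙ*` and Greene's `ₙ₊₁Fₙᴳ`. -/
theorem hypF_eq_greeneF {F : Type*} [Field F] [Fintype F]
    (θ : AddChar F ℂ) (hθ : θ ≠ 1) {n : ℕ}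
    (A : Fin (n + 1) → MulChar F ℂ) (B : Fin n → MulChar F ℂ) (x : F)
    (hA : A 0 ≠ 1) (hAB : ∀ i : Fin n, A i.succ ≠ B i) :
    hypF θ A B x = (∏ i : Fin n, (greeneBinom (A i.succ) (B i))⁻¹) * greeneF A B x := by
  rw [hypF, greeneF]
  simp only [Finset.mul_sum]
  refine Finset.sum_congr rfl fun χ _ => ?_
  have htwist : ∀ i : Fin n,
      (greeneBinom (A i.succ) (B i))⁻¹ * greeneBinom (A i.succ * χ) (B i * χ) =
        χ (-1) * (gaussSum (A i.succ * χ) θ / gaussSum (A i.succ) θ) *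
          (gaussSum (B i * χ)⁻¹ θ / gaussSum (B i)⁻¹ θ) := fun i => by
    rw [greeneBinom_mul_right hθ (hAB i), mul_comm, mul_assoc,
      mul_inv_cancel₀ (greeneBinom_ne_zero hθ (hAB i)), mul_one]
  calc _ = 1 / ((Fintype.card F : ℂ) - 1) *
        (χ (-1) * (gaussSum (A 0 * χ) θ / gaussSum (A 0) θ) * gaussSum χ⁻¹ θ) *
        (∏ i : Fin n, χ (-1) * (gaussSum (A i.succ * χ) θ / gaussSum (A i.succ) θ) *
          (gaussSum (B i * χ)⁻¹ θ / gaussSum (B i)⁻¹ θ)) * χ x := by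
        simp only [Finset.prod_mul_distrib, Finset.prod_const, Finset.card_univ, Fintype.card_fin,
          Fin.prod_univ_succ (fun i => gaussSum (A i * χ) θ / gaussSum (A i) θ)]
        ring
    _ = _ := by
        rw [← card_mul_greeneBinom_mul_left_self hθ hA, ← Finset.prod_congr rfl fun i _ => htwist i,
          Finset.prod_mul_distrib]
        ring
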